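/- Let n ≥ 1, let x, y ∈ [0,∞)^n, and fix an integer r ≥ 0. If Σ_{i=1}^n ψ_r(x_i t) ≥ Σ_{i=1}^n ψ_r(y_i t) for all real t > 0, then ‖x‖_p ≥ ‖y‖_p for every real p with r ≤ p ≤ r+1. -/

import Mathlib

open scoped BigOperators

/-- The `p`-norm `((1/n) Σ xᵢ^p)^(1/p)` for `p ≠ 0`, and the geometric mean
`(Π xᵢ)^(1/n)` for `p = 0`. -/
noncomputable def pNorm {n : ℕ} (p : ℝ) (x : Fin n → ℝ) : ℝ :=
  if p = 0 then (∏ i, x i) ^ ((n : ℝ)⁻¹)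
  else ((n : ℝ)⁻¹ * ∑ i, x i ^ p) ^ p⁻¹

/-- `Q_r(s) = Σ_{m=1}^r (-1)^(m-1) s^m / m`, the `r`-th Taylor polynomial of `log(1+s)`
(`Q_0 = 0`), and `ψ_r(t) = (-1)^r (log(1+t) - Q_r(t))`. -/
noncomputable def psiFun (r : ℕ) (t : ℝ) : ℝ :=
  (-1 : ℝ) ^ r *
    (Real.log (1 + t) - ∑ m ∈ Finset.Icc 1 r, (-1 : ℝ) ^ (m - 1) * t ^ m / m)

/-!
On `t ≥ 0`, `ψ_r(t) = ∫₀ᵗ uʳ/(1+u) du`, so `0 ≤ ψ_r(t) ≤ t^q/q` for `r ≤ q ≤ r+1`. For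
`r < p < r+1` the Mellin-type integral `∫₀^∞ ψ_r(cu) u^(-p-1) du` therefore converges and, by
the substitution `u ↦ u/c`, equals `c^p · C_p` with `C_p > 0`. Integrating the hypothesis
against `u^(-p-1)` gives `Σ yᵢ^p ≤ Σ xᵢ^p`, and continuity in `p` extends this to `[r, r+1]`.
The geometric mean (`p = 0`, forcing `r = 0`) is handled directly: exponentiating gives
`Π (1 + yᵢt) ≤ Π (1 + xᵢt)`, and dividing by `tⁿ` and letting `t → ∞` gives `Π yᵢ ≤ Π xᵢ`.
-/

open MeasureTheory Set

lemma psiFun_zero (t : ℝ) : psiFun 0 t = Real.log (1 + t) := by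
  simp [psiFun]

lemma psiFun_succ (r : ℕ) (t : ℝ) :
    psiFun (r + 1) t = t ^ (r + 1) / (r + 1) - psiFun r t := by
  simp only [psiFun, Finset.sum_Icc_succ_top (Nat.le_add_left 1 r), Nat.add_sub_cancel,
    Nat.cast_add, Nat.cast_one]
  have hsq : ((-1 : ℝ) ^ r) ^ 2 = 1 := by rw [← pow_mul, mul_comm, pow_mul]; norm_num
  linear_combination (t ^ (r + 1) / (r + 1)) * hsq

lemma psiFun_zero_right (r : ℕ) : psiFun r 0 = 0 := by
  induction r with
  | zero => simp [psiFun_zero]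
  | succ r ih => simp [psiFun_succ, ih]

lemma hasDerivAt_psiFun (r : ℕ) {t : ℝ} (ht : -1 < t) :
    HasDerivAt (psiFun r) (t ^ r / (1 + t)) t := by
  have h1t : 1 + t ≠ 0 := by linarith
  induction r with
  | zero =>
    simpa [funext psiFun_zero] using ((hasDerivAt_id t).const_add 1).log h1t
  | succ r ih =>
    rw [funext (psiFun_succ r)]
    refine (((hasDerivAt_pow (r + 1) t).div_const ((r : ℝ) + 1)).fun_sub ih).congr_deriv ?_
    push_cast
    field_simp
    ring

lemma continuousOn_psiFun (r : ℕ) : ContinuousOn (psiFun r) (Ioi (-1)) :=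
  fun _ ht => (hasDerivAt_psiFun r ht).continuousAt.continuousWithinAt

lemma intervalIntegrable_pow_div_one_add (r : ℕ) {t : ℝ} (ht : 0 ≤ t) :
    IntervalIntegrable (fun u : ℝ => u ^ r / (1 + u)) volume 0 t := by
  refine ContinuousOn.intervalIntegrable (ContinuousOn.div (by fun_prop) (by fun_prop) ?_)
  intro u hu
  rw [uIcc_of_le ht] at hu
  linarith [hu.1]

lemma psiFun_eq_integral (r : ℕ) {t : ℝ} (ht : 0 ≤ t) :
    psiFun r t = ∫ u in (0 : ℝ)..t, u ^ r / (1 + u) := by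
  rw [intervalIntegral.integral_eq_sub_of_hasDerivAt (fun u hu => hasDerivAt_psiFun r ?_)
    (intervalIntegrable_pow_div_one_add r ht), psiFun_zero_right, sub_zero]
  rw [uIcc_of_le ht] at hu
  linarith [hu.1]

lemma psiFun_nonneg (r : ℕ) {t : ℝ} (ht : 0 ≤ t) : 0 ≤ psiFun r t := by
  rw [psiFun_eq_integral r ht]
  exact intervalIntegral.integral_nonneg ht fun u hu => by have : 0 ≤ u := hu.1; positivity

lemma psiFun_pos (r : ℕ) {t : ℝ} (ht : 0 < t) : 0 < psiFun r t := by
  rw [psiFun_eq_integral r ht.le]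
  refine intervalIntegral.intervalIntegral_pos_of_pos_on
    (intervalIntegrable_pow_div_one_add r ht.le) (fun u hu => ?_) ht
  have : 0 < u := hu.1
  positivity

lemma pow_div_one_add_le_rpow {r : ℕ} {q u : ℝ} (hrq : (r : ℝ) ≤ q) (hqr : q ≤ r + 1)
    (hu : 0 < u) : u ^ r / (1 + u) ≤ u ^ (q - 1) := by
  rw [div_le_iff₀ (by linarith), ← Real.rpow_natCast, mul_one_add,
    ← Real.rpow_add_one hu.ne', sub_add_cancel]
  have h₁ := Real.rpow_nonneg hu.le (q - 1)
  have h₂ := Real.rpow_nonneg hu.le q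
  rcases le_total u 1 with hu1 | hu1
  · linarith [Real.rpow_le_rpow_of_exponent_ge hu hu1 (by linarith : q - 1 ≤ r)]
  · linarith [Real.rpow_le_rpow_of_exponent_le hu1 hrq]

lemma psiFun_le_rpow_div {r : ℕ} {q t : ℝ} (hq : 0 < q) (hrq : (r : ℝ) ≤ q)
    (hqr : q ≤ r + 1) (ht : 0 ≤ t) : psiFun r t ≤ t ^ q / q := by
  have hint : ∫ u in (0 : ℝ)..t, u ^ (q - 1) = t ^ q / q := by
    rw [integral_rpow (Or.inl (by linarith)), sub_add_cancel, Real.zero_rpow hq.ne', sub_zero]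
  rw [psiFun_eq_integral r ht, ← hint]
  refine intervalIntegral.integral_mono_on_of_le_Ioo ht
    (intervalIntegrable_pow_div_one_add r ht)
    (intervalIntegral.intervalIntegrable_rpow' (by linarith)) fun u hu => ?_
  exact pow_div_one_add_le_rpow hrq hqr hu.1

section Mellin

variable {r : ℕ} {p : ℝ}

lemma continuousOn_psiFun_comp_mul_rpow {c : ℝ} (hc : 0 ≤ c) :
    ContinuousOn (fun u : ℝ => psiFun r (c * u) * u ^ (-p - 1)) (Ioi 0) := by
  refine ContinuousOn.mul ((continuousOn_psiFun r).comp (by fun_prop) fun u (hu : 0 < u) => ?_)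
    fun u hu => (Real.continuousAt_rpow_const u _ (Or.inl (ne_of_gt hu))).continuousWithinAt
  show -1 < c * u
  linarith [mul_nonneg hc hu.le]

lemma norm_psiFun_comp_mul_rpow_le {c q u : ℝ} (hc : 0 ≤ c) (hu : 0 < u) (hq : 0 < q)
    (hrq : (r : ℝ) ≤ q) (hqr : q ≤ r + 1) :
    ‖psiFun r (c * u) * u ^ (-p - 1)‖ ≤ c ^ q / q * u ^ (q - p - 1) := by
  have hcu : 0 ≤ c * u := mul_nonneg hc hu.le
  rw [Real.norm_of_nonneg (mul_nonneg (psiFun_nonneg r hcu) (Real.rpow_nonneg hu.le _))]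
  calc psiFun r (c * u) * u ^ (-p - 1)
      ≤ (c * u) ^ q / q * u ^ (-p - 1) := by
        gcongr
        exact psiFun_le_rpow_div hq hrq hqr hcu
    _ = c ^ q / q * u ^ (q - p - 1) := by
        rw [Real.mul_rpow hc hu.le, mul_div_right_comm, mul_assoc, ← Real.rpow_add hu]
        ring_nf

/-- Near `0` the integrand is `O(u ^ (r - p))` and near `∞` it is `O(u ^ (q - p - 1))` for any
`q ∈ (r, p)`. -/
lemma integrableOn_psiFun_comp_mul_rpow (hrp : (r : ℝ) < p) (hpr : p < r + 1) {c : ℝ}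
    (hc : 0 ≤ c) :
    IntegrableOn (fun u : ℝ => psiFun r (c * u) * u ^ (-p - 1)) (Ioi 0) := by
  have hr : (0 : ℝ) ≤ r := Nat.cast_nonneg r
  have hcont := continuousOn_psiFun_comp_mul_rpow (r := r) (p := p) hc
  rw [← Ioc_union_Ioi_eq_Ioi zero_le_one]
  refine IntegrableOn.union ?_ ?_
  · refine Integrable.mono' (((intervalIntegrable_iff_integrableOn_Ioc_of_le zero_le_one).1
      (intervalIntegral.intervalIntegrable_rpow' (r := r + 1 - p - 1) (by linarith))).const_mul
      (c ^ ((r : ℝ) + 1) / (r + 1)))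
      ((hcont.mono Ioc_subset_Ioi_self).aestronglyMeasurable measurableSet_Ioc) ?_
    exact ae_restrict_of_forall_mem measurableSet_Ioc fun u hu =>
      norm_psiFun_comp_mul_rpow_le hc hu.1 (by linarith) (by linarith) le_rfl
  · obtain ⟨q, hrq, hqp⟩ := exists_between hrp
    refine Integrable.mono' ((integrableOn_Ioi_rpow_of_lt (a := q - p - 1) (by linarith)
      one_pos).const_mul (c ^ q / q))
      ((hcont.mono (Ioi_subset_Ioi zero_le_one)).aestronglyMeasurable measurableSet_Ioi) ?_
    exact ae_restrict_of_forall_mem measurableSet_Ioi fun u (hu : 1 < u) =>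
      norm_psiFun_comp_mul_rpow_le hc (zero_lt_one.trans hu) (by linarith) hrq.le (by linarith)

lemma integral_psiFun_comp_mul_rpow (hp : p ≠ 0) {c : ℝ} (hc : 0 ≤ c) :
    ∫ u in Ioi (0 : ℝ), psiFun r (c * u) * u ^ (-p - 1)
      = c ^ p * ∫ u in Ioi (0 : ℝ), psiFun r u * u ^ (-p - 1) := by
  rcases hc.eq_or_lt with rfl | hc
  · simp [psiFun_zero_right, Real.zero_rpow hp]
  have hscale : ∀ u ∈ Ioi (0 : ℝ), psiFun r (c * u) * u ^ (-p - 1)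
      = c ^ (p + 1) * (psiFun r (c * u) * (c * u) ^ (-p - 1)) := by
    intro u (hu : 0 < u)
    rw [Real.mul_rpow hc.le hu.le, mul_left_comm, ← mul_assoc (c ^ (p + 1)),
      ← Real.rpow_add hc]
    simp
  rw [setIntegral_congr_fun measurableSet_Ioi hscale, integral_const_mul,
    integral_comp_mul_left_Ioi (fun v => psiFun r v * v ^ (-p - 1)) 0 hc, mul_zero,
    smul_eq_mul, ← mul_assoc, ← Real.rpow_neg_one c, ← Real.rpow_add hc]
  ring_nf

lemma integral_psiFun_mul_rpow_pos (hrp : (r : ℝ) < p) (hpr : p < r + 1) :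
    0 < ∫ u in Ioi (0 : ℝ), psiFun r u * u ^ (-p - 1) := by
  have hint := integrableOn_psiFun_comp_mul_rpow hrp hpr zero_le_one
  simp only [one_mul] at hint
  have hnn : 0 ≤ᵐ[volume.restrict (Ioi 0)] fun u : ℝ => psiFun r u * u ^ (-p - 1) :=
    ae_restrict_of_forall_mem measurableSet_Ioi fun u (hu : 0 < u) =>
      mul_nonneg (psiFun_nonneg r hu.le) (Real.rpow_nonneg hu.le _)
  rw [setIntegral_pos_iff_support_of_nonneg_ae hnn hint]
  have hsupp : Ioi 0 ⊆ Function.support (fun u : ℝ => psiFun r u * u ^ (-p - 1)) ∩ Ioi 0 :=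
    fun u (hu : 0 < u) => ⟨(mul_pos (psiFun_pos r hu) (Real.rpow_pos_of_pos hu _)).ne', hu⟩
  exact (by simp : 0 < volume (Ioi (0 : ℝ))).trans_le (measure_mono hsupp)

end Mellin

section Comparison

variable {ι : Type*} [Fintype ι] {x y : ι → ℝ}

lemma sum_rpow_le_of_psiFun_le {r : ℕ} (hx : ∀ i, 0 ≤ x i) (hy : ∀ i, 0 ≤ y i)
    (h : ∀ t : ℝ, 0 < t → ∑ i, psiFun r (y i * t) ≤ ∑ i, psiFun r (x i * t))
    {p : ℝ} (hrp : (r : ℝ) < p) (hpr : p < r + 1) :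
    ∑ i, y i ^ p ≤ ∑ i, x i ^ p := by
  have hp : p ≠ 0 := ((Nat.cast_nonneg r).trans_lt hrp).ne'
  have hmellin : ∀ z : ι → ℝ, (∀ i, 0 ≤ z i) →
      ∫ u in Ioi (0 : ℝ), (∑ i, psiFun r (z i * u)) * u ^ (-p - 1)
        = (∑ i, z i ^ p) * ∫ u in Ioi (0 : ℝ), psiFun r u * u ^ (-p - 1) := by
    intro z hz
    simp only [Finset.sum_mul]
    rw [integral_finsetSum _ fun i _ => integrableOn_psiFun_comp_mul_rpow hrp hpr (hz i)]
    exact Finset.sum_congr rfl fun i _ => integral_psiFun_comp_mul_rpow hp (hz i)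
  have hintegrable : ∀ z : ι → ℝ, (∀ i, 0 ≤ z i) →
      IntegrableOn (fun u : ℝ => (∑ i, psiFun r (z i * u)) * u ^ (-p - 1)) (Ioi 0) := by
    intro z hz
    simp only [Finset.sum_mul]
    exact integrable_finsetSum _ fun i _ => integrableOn_psiFun_comp_mul_rpow hrp hpr (hz i)
  have hmono := setIntegral_mono_on (hintegrable y hy) (hintegrable x hx) measurableSet_Ioi
    fun u (hu : 0 < u) => mul_le_mul_of_nonneg_right (h u hu) (Real.rpow_nonneg hu.le _)
  rw [hmellin x hx, hmellin y hy] at hmono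
  exact le_of_mul_le_mul_right hmono (integral_psiFun_mul_rpow_pos hrp hpr)

lemma sum_rpow_le_of_psiFun_le_of_mem_Icc {r : ℕ} (hx : ∀ i, 0 ≤ x i) (hy : ∀ i, 0 ≤ y i)
    (h : ∀ t : ℝ, 0 < t → ∑ i, psiFun r (y i * t) ≤ ∑ i, psiFun r (x i * t))
    {p : ℝ} (hp : p ≠ 0) (hrp : (r : ℝ) ≤ p) (hpr : p ≤ r + 1) :
    ∑ i, y i ^ p ≤ ∑ i, x i ^ p := by
  have hcont : ∀ z : ι → ℝ, ContinuousWithinAt (fun q : ℝ => ∑ i, z i ^ q) (Ioo r (r + 1)) p :=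
    fun z => ContinuousAt.continuousWithinAt
      (tendsto_finsetSum _ fun i _ => Real.continuousAt_const_rpow' hp)
  refine ContinuousWithinAt.closure_le ?_ (hcont y) (hcont x) fun q hq =>
    sum_rpow_le_of_psiFun_le hx hy h hq.1 hq.2
  rw [closure_Ioo (by linarith)]
  exact ⟨hrp, hpr⟩

lemma prod_le_prod_of_prod_one_add_mul_le
    (h : ∀ t : ℝ, 0 < t → ∏ i, (1 + y i * t) ≤ ∏ i, (1 + x i * t)) :
    ∏ i, y i ≤ ∏ i, x i := by
  have hshift : ∀ ε : ℝ, 0 < ε → ∏ i, (ε + y i) ≤ ∏ i, (ε + x i) := by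
    intro ε hε
    have hscale : ∀ z : ι → ℝ, ∏ i, (ε + z i) = ε ^ Fintype.card ι * ∏ i, (1 + z i * ε⁻¹) := by
      intro z
      rw [← Finset.card_univ, ← Finset.prod_const, ← Finset.prod_mul_distrib]
      exact Finset.prod_congr rfl fun i _ => by field_simp
    rw [hscale x, hscale y]
    exact mul_le_mul_of_nonneg_left (h ε⁻¹ (inv_pos.2 hε)) (by positivity)
  have hlim : ∀ z : ι → ℝ, Filter.Tendsto (fun ε : ℝ => ∏ i, (ε + z i))
      (nhdsWithin 0 (Ioi 0)) (nhds (∏ i, z i)) := by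
    intro z
    have hc : Continuous fun ε : ℝ => ∏ i, (ε + z i) := by fun_prop
    simpa using (hc.tendsto 0).mono_left nhdsWithin_le_nhds
  exact le_of_tendsto_of_tendsto (hlim y) (hlim x) (eventually_nhdsWithin_of_forall hshift)

lemma prod_le_prod_of_psiFun_zero_le (hx : ∀ i, 0 ≤ x i) (hy : ∀ i, 0 ≤ y i)
    (h : ∀ t : ℝ, 0 < t → ∑ i, psiFun 0 (y i * t) ≤ ∑ i, psiFun 0 (x i * t)) :
    ∏ i, y i ≤ ∏ i, x i := by
  refine prod_le_prod_of_prod_one_add_mul_le fun t ht => ?_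
  have hexp : ∀ z : ι → ℝ, (∀ i, 0 ≤ z i) →
      Real.exp (∑ i, psiFun 0 (z i * t)) = ∏ i, (1 + z i * t) := by
    intro z hz
    rw [Real.exp_sum]
    refine Finset.prod_congr rfl fun i _ => ?_
    rw [psiFun_zero, Real.exp_log (by nlinarith [hz i])]
  rw [← hexp x hx, ← hexp y hy]
  exact Real.exp_le_exp.2 (h t ht)

end Comparison

theorem stmt_5_general (n : ℕ) (x y : Fin n → ℝ)
    (hx : ∀ i, 0 ≤ x i) (hy : ∀ i, 0 ≤ y i) (r : ℕ)
    (h : ∀ t : ℝ, 0 < t → ∑ i, psiFun r (y i * t) ≤ ∑ i, psiFun r (x i * t)) :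
    ∀ p : ℝ, (r : ℝ) ≤ p → p ≤ r + 1 → pNorm p y ≤ pNorm p x := by
  intro p hrp hpr
  rcases eq_or_ne p 0 with rfl | hp
  · obtain rfl : r = 0 := by exact_mod_cast hrp.antisymm (Nat.cast_nonneg r)
    simp only [pNorm, if_pos]
    exact Real.rpow_le_rpow (Finset.prod_nonneg fun i _ => hy i)
      (prod_le_prod_of_psiFun_zero_le hx hy h) (by positivity)
  · have hp_pos : 0 < p := ((Nat.cast_nonneg r).trans hrp).lt_of_ne' hp
    simp only [pNorm, if_neg hp]
    refine Real.rpow_le_rpow ?_ ?_ (inv_nonneg.2 hp_pos.le)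
    · exact mul_nonneg (by positivity) (Finset.sum_nonneg fun i _ => Real.rpow_nonneg (hy i) p)
    · exact mul_le_mul_of_nonneg_left (sum_rpow_le_of_psiFun_le_of_mem_Icc hx hy h hp hrp hpr)
        (by positivity)

theorem stmt_5 (n : ℕ) (hn : 1 ≤ n) (x y : Fin n → ℝ)
    (hx : ∀ i, 0 ≤ x i) (hy : ∀ i, 0 ≤ y i) (r : ℕ)
    (h : ∀ t : ℝ, 0 < t → ∑ i, psiFun r (y i * t) ≤ ∑ i, psiFun r (x i * t)) :
    ∀ p : ℝ, (r : ℝ) ≤ p → p ≤ r + 1 → pNorm p y ≤ pNorm p x :=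
  stmt_5_general n x y hx hy r h
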